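/- arXiv:1509.05097 — 3 statements merged into one kernel-verified Lean document; each statement's English description precedes it below -/
import Mathlib

section
/- Let α(s) = sgn(s)·β(|s|) with β : (0,∞) → [0,∞) nonincreasing, min(s,1)·β(s) integrable on (0,∞), and α₁ := 2∫₀^∞ s·β(s) ds ∈ (0,∞). Assume the bounded-kernel flatness condition: β₀ := lim_{s→0⁺} β(s) < ∞, and there exist b > 0, k > 0, and K₋ ≥ K₊ > 0 with −K₋·s^k ≤ β(s) − β₀ ≤ −K₊·s^k for all s ∈ (0,b), and c := ∫₀¹ sin(πu)·(K₊·(u+1)^k − K₋·u^k) du > 0. Then for every ε > 0 and every ξ ≥ 1/(εb): S_ε(ξ) ≥ (c·2^{−k}/α₁)·ε^{−2−k}·ξ^{−1−k} > 0. (Far-field lower bound, bounded-kernel case.) -/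
/-!
Substituting `t = ε s` turns `S ε ξ` into `2 / (ε α₁)` times the sine transform of `β` at
frequency `ω = 2πξε`. Put `h = π / ω`. Since `sin (ω (t + h)) = - sin (ω t)`, the integral over a
period `[2mh, 2(m+1)h]` equals `∫ sin (ω t) (β t - β (t + h))` over its first half, which is
nonnegative because `β` is nonincreasing; so the transform is at least the contribution of the first
period. The condition `ξ ≥ 1 / (ε b)` says `2h ≤ b`, so the power-law bounds give
`β t - β (t + h) ≥ K₊ (t + h)^k - K₋ t^k` there, and `t = h u` turns this into `c h^(k+1)`.
-/

open MeasureTheory Real Set Filter Topology intervalIntegral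

lemma MeasureTheory.IntegrableOn.intervalIntegrable_of_Ioi {F : ℝ → ℝ} {c a b : ℝ}
    (hF : IntegrableOn F (Ioi c)) (ha : c ≤ a) (hb : c ≤ b) : IntervalIntegrable F volume a b :=
  (intervalIntegrable_iff.2 <| hF.mono_set fun _ hx => (le_min ha hb).trans_lt hx.1)

lemma integral_Ioi_ge_of_forall_block_nonneg {F : ℝ → ℝ} {L : ℝ} (hL : 0 < L)
    (hF : IntegrableOn F (Ioi 0)) (hblock : ∀ m : ℕ, 0 ≤ ∫ t in m * L..(m + 1) * L, F t) :
    ∫ t in 0..L, F t ≤ ∫ t in Ioi 0, F t := by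
  have hpartial : ∀ N : ℕ, 1 ≤ N → ∫ t in 0..L, F t ≤ ∫ t in 0..N * L, F t := by
    intro N hN
    have hsum := sum_integral_adjacent_intervals (a := fun m : ℕ => m * L) (n := N) (f := F)
      (μ := volume) fun m _ => hF.intervalIntegrable_of_Ioi (by positivity) (by positivity)
    simp only [Nat.cast_zero, zero_mul, Nat.cast_succ] at hsum
    rw [← hsum]
    simpa using Finset.single_le_sum (fun m _ => hblock m) (Finset.mem_range.2 hN)
  have hlim : Tendsto (fun N : ℕ => ∫ t in 0..N * L, F t) atTop (𝓝 (∫ t in Ioi 0, F t)) :=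
    intervalIntegral_tendsto_integral_Ioi 0 hF (tendsto_natCast_atTop_atTop.atTop_mul_const hL)
  exact ge_of_tendsto hlim (eventually_atTop.2 ⟨1, hpartial⟩)

lemma sin_mul_add_of_mul_eq_pi {ω h : ℝ} (hωh : ω * h = π) (t : ℝ) :
    sin (ω * (t + h)) = -sin (ω * t) := by
  rw [mul_add, hωh, sin_add_pi]

lemma integrableOn_sin_mul {g : ℝ → ℝ} {s : Set ℝ} (hg : IntegrableOn g s) (ω : ℝ) :
    IntegrableOn (fun t => sin (ω * t) * g t) s :=
  hg.bdd_mul (by fun_prop) (c := 1) (ae_of_all _ fun t => by simpa using abs_sin_le_one (ω * t))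

section HalfPeriod

variable {g : ℝ → ℝ} {ω h : ℝ}

lemma integral_sin_mul_two_half_periods (hωh : ω * h = π) (hh : 0 ≤ h)
    (hg : IntegrableOn g (Ioi 0)) {a : ℝ} (ha : 0 ≤ a) :
    ∫ t in a..a + 2 * h, sin (ω * t) * g t =
      ∫ t in a..a + h, sin (ω * t) * (g t - g (t + h)) := by
  set F := fun t => sin (ω * t) * g t
  have hF : ∀ x y, 0 ≤ x → 0 ≤ y → IntervalIntegrable F volume x y := fun x y hx hy =>
    (integrableOn_sin_mul hg ω).intervalIntegrable_of_Ioi hx hy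
  have hFshift : IntervalIntegrable (fun t => F (t + h)) volume a (a + h) := by
    have := (hF (a + h) (a + 2 * h) (by positivity) (by positivity)).comp_add_right h
    rwa [add_sub_cancel_right, show a + 2 * h - h = a + h by ring] at this
  calc ∫ t in a..a + 2 * h, F t
      = (∫ t in a..a + h, F t) + ∫ t in a..a + h, F (t + h) := by
        rw [← integral_add_adjacent_intervals (hF a (a + h) ha (by positivity))
          (hF (a + h) (a + 2 * h) (by positivity) (by positivity)), integral_comp_add_right F h,
          show a + h + h = a + 2 * h by ring]
    _ = ∫ t in a..a + h, (F t + F (t + h)) :=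
        (integral_add (hF a (a + h) ha (by positivity)) hFshift).symm
    _ = _ := integral_congr fun t _ => by
        simp only [F, sin_mul_add_of_mul_eq_pi hωh]
        ring

lemma integral_sin_mul_sub_shift_nonneg (hω : 0 < ω) (hωh : ω * h = π)
    (hg : AntitoneOn g (Ioi 0)) (m : ℕ) :
    0 ≤ ∫ t in 2 * m * h..2 * m * h + h, sin (ω * t) * (g t - g (t + h)) := by
  have hh : 0 < h := pos_of_mul_pos_right (hωh ▸ pi_pos) hω.le
  refine integral_nonneg (by linarith) fun t ⟨ht₁, ht₂⟩ => ?_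
  rcases (show (0:ℝ) ≤ 2 * m * h by positivity).trans ht₁ |>.eq_or_lt with rfl | ht
  · simp
  have hsin : 0 ≤ sin (ω * t) := by
    rw [← sin_sub_nat_mul_two_pi _ m]
    apply sin_nonneg_of_nonneg_of_le_pi
    · nlinarith [mul_le_mul_of_nonneg_left ht₁ hω.le]
    · nlinarith [mul_le_mul_of_nonneg_left ht₂ hω.le]
  exact mul_nonneg hsin (sub_nonneg.2 (hg ht (ht.trans (by linarith)) (by linarith)))

lemma integral_sin_mul_sub_shift_le_integral_Ioi (hω : 0 < ω) (hωh : ω * h = π)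
    (hg : AntitoneOn g (Ioi 0)) (hgi : IntegrableOn g (Ioi 0)) :
    ∫ t in 0..h, sin (ω * t) * (g t - g (t + h)) ≤ ∫ t in Ioi 0, sin (ω * t) * g t := by
  have hh : 0 < h := pos_of_mul_pos_right (hωh ▸ pi_pos) hω.le
  have hfirst := integral_sin_mul_two_half_periods hωh hh.le hgi le_rfl
  rw [zero_add, zero_add] at hfirst
  rw [← hfirst]
  refine integral_Ioi_ge_of_forall_block_nonneg (by positivity) (integrableOn_sin_mul hgi ω)
    fun m => ?_
  rw [show (m : ℝ) * (2 * h) = 2 * m * h by ring,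
    show ((m : ℝ) + 1) * (2 * h) = 2 * m * h + 2 * h by ring,
    integral_sin_mul_two_half_periods hωh hh.le hgi (by positivity)]
  exact integral_sin_mul_sub_shift_nonneg hω hωh hg m

end HalfPeriod

lemma integrableOn_Ioi_of_antitoneOn_of_integrableOn_min_mul {β : ℝ → ℝ} {β₀ : ℝ}
    (hβ : AntitoneOn β (Ioi 0)) (hβ₀ : Tendsto β (𝓝[>] 0) (𝓝 β₀))
    (hint : IntegrableOn (fun s => min s 1 * β s) (Ioi 0)) : IntegrableOn β (Ioi 0) := by
  have hle : ∀ s ∈ Ioi (0 : ℝ), β s ≤ β₀ := fun s hs =>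
    ge_of_tendsto hβ₀ <|
      eventually_of_mem (Ioo_mem_nhdsGT (mem_Ioi.1 hs)) fun t ht => hβ ht.1 hs ht.2.le
  have hnear : IntegrableOn β (Ioc 0 1) := by
    refine Integrable.mono' (integrable_const (max |β 1| |β₀|))
      ((aemeasurable_restrict_of_antitoneOn measurableSet_Ioc
        (hβ.mono Ioc_subset_Ioi_self)).aestronglyMeasurable)
      ((ae_restrict_iff' measurableSet_Ioc).2 (ae_of_all _ fun s hs => ?_))
    exact abs_le_max_abs_abs (hβ hs.1 (zero_lt_one' ℝ) hs.2) (hle s hs.1)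
  have hfar : IntegrableOn β (Ioi 1) :=
    (hint.mono_set (Ioi_subset_Ioi zero_le_one)).congr_fun
      (fun s hs => by simp [min_eq_right (le_of_lt (mem_Ioi.1 hs))]) measurableSet_Ioi
  exact Ioc_union_Ioi_eq_Ioi (zero_le_one' ℝ) ▸ hnear.union hfar

section PowerLaw

variable {β : ℝ → ℝ} {β₀ b k Km Kp ω h : ℝ}

lemma integral_sin_mul_power_sub_eq (hωh : ω * h = π) (hh : 0 < h) :
    ∫ t in 0..h, sin (ω * t) * (Kp * (t + h) ^ k - Km * t ^ k) =
      h ^ (k + 1) * ∫ u in Ioo 0 1, sin (π * u) * (Kp * (u + 1) ^ k - Km * u ^ k) := by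
  have hscale := integral_comp_mul_right (a := 0) (b := 1)
    (fun t => sin (ω * t) * (Kp * (t + h) ^ k - Km * t ^ k)) hh.ne'
  rw [zero_mul, one_mul, smul_eq_mul, eq_inv_mul_iff_mul_eq₀ hh.ne'] at hscale
  rw [← hscale,
    integral_congr (g := fun u => h ^ k * (sin (π * u) * (Kp * (u + 1) ^ k - Km * u ^ k))),
    intervalIntegral.integral_const_mul, integral_of_le zero_le_one, integral_Ioc_eq_integral_Ioo,
    rpow_add_one hh.ne']
  · ring
  intro u hu
  rw [uIcc_of_le zero_le_one] at hu
  simp only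
  rw [show ω * (u * h) = π * u by rw [← hωh]; ring, show u * h + h = (u + 1) * h by ring,
    mul_rpow (by linarith [hu.1]) hh.le, mul_rpow hu.1 hh.le]
  ring

lemma integral_sin_mul_ge_of_power_bounds (hβ : AntitoneOn β (Ioi 0))
    (hβi : IntegrableOn β (Ioi 0)) (hk : 0 ≤ k)
    (hlow : ∀ s, 0 < s → s < b → -Km * s ^ k ≤ β s - β₀)
    (hhigh : ∀ s, 0 < s → s < b → β s - β₀ ≤ -Kp * s ^ k)
    (hω : 0 < ω) (hωh : ω * h = π) (h2h : 2 * h ≤ b) :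
    h ^ (k + 1) * ∫ u in Ioo 0 1, sin (π * u) * (Kp * (u + 1) ^ k - Km * u ^ k) ≤
      ∫ t in Ioi 0, sin (ω * t) * β t := by
  have hh : 0 < h := pos_of_mul_pos_right (hωh ▸ pi_pos) hω.le
  rw [← integral_sin_mul_power_sub_eq hωh hh]
  refine le_trans (integral_mono_on_of_le_Ioo hh.le ?_ ?_ fun t ht => ?_)
    (integral_sin_mul_sub_shift_le_integral_Ioi hω hωh hβ hβi)
  · exact Continuous.intervalIntegrable (by fun_prop (disch := exact hk)) _ _
  · have hshift :=
      (hβi.intervalIntegrable_of_Ioi (a := h) (b := 2 * h) hh.le (by positivity)).comp_add_right h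
    rw [sub_self, show 2 * h - h = h by ring] at hshift
    exact ((hβi.intervalIntegrable_of_Ioi le_rfl hh.le).sub hshift).continuousOn_mul
      (by fun_prop)
  · have hsin : 0 ≤ sin (ω * t) := sin_nonneg_of_nonneg_of_le_pi (by nlinarith [ht.1])
      (by nlinarith [ht.2])
    refine mul_le_mul_of_nonneg_left ?_ hsin
    linarith [hlow t ht.1 (by linarith [ht.2]), hhigh (t + h) (by linarith [ht.1])
      (by linarith [ht.2])]

end PowerLaw

lemma integral_Ioi_sin_mul_comp_div (β : ℝ → ℝ) {ε : ℝ} (hε : 0 < ε) (ω : ℝ) :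
    ∫ t in Ioi 0, sin (ω * t) * β (t / ε) = ε * ∫ t in Ioi 0, sin (ω * ε * t) * β t := by
  have hsub := integral_comp_mul_right_Ioi (fun t => sin (ω * ε * t) * β t) 0 (inv_pos.2 hε)
  simp only [zero_mul, inv_inv, smul_eq_mul] at hsub
  rw [← hsub]
  congr 1 with t
  field_simp

theorem stmt_13_general (β : ℝ → ℝ)
    (hmono : ∀ s t, 0 < s → s ≤ t → β t ≤ β s)
    (hint : IntegrableOn (fun s => min s 1 * β s) (Set.Ioi 0))
    (α₁ : ℝ) (hα₁pos : 0 < α₁)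
    (β₀ : ℝ) (hβ₀ : Tendsto β (nhdsWithin 0 (Set.Ioi 0)) (nhds β₀))
    (b k Km Kp : ℝ) (hb : 0 < b) (hk : 0 < k)
    (hlow : ∀ s, 0 < s → s < b → -Km * s ^ k ≤ β s - β₀)
    (hhigh : ∀ s, 0 < s → s < b → β s - β₀ ≤ -Kp * s ^ k)
    (c : ℝ)
    (hc : c = ∫ u in Set.Ioo (0:ℝ) 1, Real.sin (π * u) * (Kp * (u + 1) ^ k - Km * u ^ k))
    (hcpos : 0 < c)
    (S : ℝ → ℝ → ℝ)
    (hS : ∀ ε ξ, S ε ξ =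
      2 * ∫ t in Set.Ioi (0:ℝ), Real.sin (2 * π * ξ * t) * (β (t / ε) / (ε ^ 2 * α₁)))
    (ε : ℝ) (hε : 0 < ε) (ξ : ℝ) (hξ : 1 / (ε * b) ≤ ξ) :
    (c * (2:ℝ) ^ (-k) / α₁) * ε ^ (-2 - k) * ξ ^ (-1 - k) ≤ S ε ξ ∧
    0 < (c * (2:ℝ) ^ (-k) / α₁) * ε ^ (-2 - k) * ξ ^ (-1 - k) := by
  have hξ₀ : 0 < ξ := (by positivity : 0 < 1 / (ε * b)).trans_le hξ
  have hβ : AntitoneOn β (Ioi 0) := fun s hs t _ hst => hmono s t hs hst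
  set h := (2 * ξ * ε)⁻¹ with hh
  have hωh : 2 * π * ξ * ε * h = π := by rw [hh]; field_simp
  have h2h : 2 * h ≤ b := by
    rw [div_le_iff₀ (by positivity)] at hξ
    rw [hh, ← div_eq_mul_inv, div_le_iff₀ (by positivity)]
    linarith
  have hbound := integral_sin_mul_ge_of_power_bounds hβ
    (integrableOn_Ioi_of_antitoneOn_of_integrableOn_min_mul hβ hβ₀ hint) hk.le hlow hhigh
    (by positivity) hωh h2h
  rw [← hc] at hbound
  have hrescale : S ε ξ = 2 / (ε * α₁) * ∫ t in Ioi 0, sin (2 * π * ξ * ε * t) * β t := by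
    simp_rw [hS, mul_div_assoc', MeasureTheory.integral_div, integral_Ioi_sin_mul_comp_div β hε]
    field_simp
  have hpow : h ^ (k + 1) = (2:ℝ) ^ (-1 - k) * ξ ^ (-1 - k) * ε ^ (-1 - k) := by
    rw [hh, inv_rpow (by positivity), ← rpow_neg (by positivity), mul_rpow (by positivity) hε.le,
      mul_rpow zero_le_two hξ₀.le, neg_add', neg_sub_comm]
  have h2 : (2:ℝ) ^ (-k) = 2 ^ (-1 - k) * 2 := by rw [← rpow_add_one two_ne_zero]; ring_nf
  have hε' : ε ^ (-1 - k) = ε ^ (-2 - k) * ε := by rw [← rpow_add_one hε.ne']; ring_nf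
  refine ⟨?_, by positivity⟩
  calc c * 2 ^ (-k) / α₁ * ε ^ (-2 - k) * ξ ^ (-1 - k)
      = 2 / (ε * α₁) * (h ^ (k + 1) * c) := by
        rw [hpow, h2, hε']
        field_simp
    _ ≤ S ε ξ := by
        rw [hrescale]
        gcongr

/-- far-field lower bound for the Fourier-sine symbol, bounded
kernel case `-K₋ s^k ≤ β(s) - β₀ ≤ -K₊ s^k` near zero with `k > 0`. -/
theorem stmt_13 (β : ℝ → ℝ) (hnn : ∀ s, 0 < s → 0 ≤ β s)
    (hmono : ∀ s t, 0 < s → s ≤ t → β t ≤ β s)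
    (hint : IntegrableOn (fun s => min s 1 * β s) (Set.Ioi 0))
    (α₁ : ℝ) (hα₁ : α₁ = 2 * ∫ s in Set.Ioi (0:ℝ), s * β s) (hα₁pos : 0 < α₁)
    (β₀ : ℝ) (hβ₀ : Tendsto β (nhdsWithin 0 (Set.Ioi 0)) (nhds β₀))
    (b k Km Kp : ℝ) (hb : 0 < b) (hk : 0 < k)
    (hKp : 0 < Kp) (hKmp : Kp ≤ Km)
    (hlow : ∀ s, 0 < s → s < b → -Km * s ^ k ≤ β s - β₀)
    (hhigh : ∀ s, 0 < s → s < b → β s - β₀ ≤ -Kp * s ^ k)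
    (c : ℝ)
    (hc : c = ∫ u in Set.Ioo (0:ℝ) 1, Real.sin (π * u) * (Kp * (u + 1) ^ k - Km * u ^ k))
    (hcpos : 0 < c)
    (S : ℝ → ℝ → ℝ)
    (hS : ∀ ε ξ, S ε ξ =
      2 * ∫ t in Set.Ioi (0:ℝ), Real.sin (2 * π * ξ * t) * (β (t / ε) / (ε ^ 2 * α₁)))
    (ε : ℝ) (hε : 0 < ε) (ξ : ℝ) (hξ : 1 / (ε * b) ≤ ξ) :
    (c * (2:ℝ) ^ (-k) / α₁) * ε ^ (-2 - k) * ξ ^ (-1 - k) ≤ S ε ξ ∧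
    0 < (c * (2:ℝ) ^ (-k) / α₁) * ε ^ (-2 - k) * ξ ^ (-1 - k) :=
  stmt_13_general β hmono hint α₁ hα₁pos β₀ hβ₀ b k Km Kp hb hk hlow hhigh c hc hcpos S hS ε hε ξ hξ
end

section
/- Let α(s) = sgn(s)·β(|s|) with β : (0,∞) → [0,∞) measurable, and assume α₁ = 2∫₀^∞ s·β(s) ds and α₃ = 2∫₀^∞ s³·β(s) ds are finite with α₁ > 0; set C_α := 4π³·α₃/(3·α₁). Then for every ε > 0 and every ξ > 0 with C_α·ε²·ξ² < 2π, one has S_ε(ξ) > 0 and 0 ≤ 2π/S_ε(ξ) − 1/ξ ≤ C_α·ε²·ξ/(2π − C_α·ε²·ξ²). (Near-field bound on the deviation of the nonlocal antiderivative's Fourier multiplier 2π/S_ε(ξ) from the classical multiplier 1/ξ.) -/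
/-!
Put `k = 2πξε`. Substituting `t = εs`, `S_ε(ξ) = 2/(εα₁) ∫₀^∞ sin(ks) β(s) ds`. Since `β ≥ 0`, the
pointwise bounds `ks - (ks)³/6 ≤ sin(ks) ≤ ks` integrate to `ξ(2π - C_α ε²ξ²) ≤ S_ε(ξ) ≤ 2πξ`, and
the claim is the elementary consequence of this sandwich for `2π/S_ε(ξ) - 1/ξ`.
-/

open MeasureTheory Real Set

theorem integral_Ioi_comp_div {E : Type*} [NormedAddCommGroup E] [NormedSpace ℝ E]
    (g : ℝ → E) {ε : ℝ} (hε : 0 < ε) :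
    ∫ t in Ioi 0, g (t / ε) = ε • ∫ s in Ioi 0, g s := by
  simpa [div_eq_mul_inv] using integral_comp_mul_right_Ioi g 0 (inv_pos.mpr hε)

section SineTransform

variable {β : ℝ → ℝ}

theorem integrableOn_sin_mul_mul (hβ : Measurable β)
    (hint1 : IntegrableOn (fun s => s * β s) (Ioi 0)) (k : ℝ) :
    IntegrableOn (fun s => sin (k * s) * β s) (Ioi 0) := by
  refine (hint1.const_mul k).mono
    ((measurable_sin.comp (measurable_const_mul k)).mul hβ).aestronglyMeasurable
    (ae_of_all _ fun s => ?_)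
  rw [norm_mul, norm_mul, norm_mul, ← mul_assoc, ← norm_mul k s]
  exact mul_le_mul_of_nonneg_right (abs_sin_le_abs (x := k * s)) (norm_nonneg (β s))

variable (hβ : Measurable β) (hnn : ∀ s, 0 < s → 0 ≤ β s)
  (hint1 : IntegrableOn (fun s => s * β s) (Ioi 0))
include hβ hnn hint1

theorem integral_sin_mul_mul_le {k : ℝ} (hk : 0 ≤ k) :
    ∫ s in Ioi 0, sin (k * s) * β s ≤ k * ∫ s in Ioi 0, s * β s := by
  rw [← integral_const_mul]
  refine setIntegral_mono_on (integrableOn_sin_mul_mul hβ hint1 k) (hint1.const_mul k)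
    measurableSet_Ioi fun s (hs : 0 < s) => ?_
  rw [← mul_assoc]
  exact mul_le_mul_of_nonneg_right (sin_le (by positivity)) (hnn s hs)

theorem le_integral_sin_mul_mul (hint3 : IntegrableOn (fun s => s ^ 3 * β s) (Ioi 0))
    {k : ℝ} (hk : 0 ≤ k) :
    (k * ∫ s in Ioi 0, s * β s) - k ^ 3 / 6 * ∫ s in Ioi 0, s ^ 3 * β s ≤
      ∫ s in Ioi 0, sin (k * s) * β s := by
  have hpointwise : ∀ s ∈ Ioi (0 : ℝ),
      k * (s * β s) - k ^ 3 / 6 * (s ^ 3 * β s) ≤ sin (k * s) * β s := fun s (hs : 0 < s) =>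
    calc k * (s * β s) - k ^ 3 / 6 * (s ^ 3 * β s) = (k * s - (k * s) ^ 3 / 6) * β s := by ring
      _ ≤ sin (k * s) * β s :=
        mul_le_mul_of_nonneg_right (sin_ge_sub_cube (by positivity)) (hnn s hs)
  have hmono := setIntegral_mono_on ((hint1.const_mul k).sub (hint3.const_mul (k ^ 3 / 6)))
    (integrableOn_sin_mul_mul hβ hint1 k) measurableSet_Ioi hpointwise
  simp only [Pi.sub_apply] at hmono
  rwa [integral_sub (hint1.const_mul k) (hint3.const_mul _), integral_const_mul,
    integral_const_mul] at hmono

end SineTransform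

theorem div_sub_one_div_bounds_of_sandwich {c D ξ S : ℝ} (hξ : 0 < ξ) (hsmall : D * ξ ^ 2 < c)
    (hlow : ξ * (c - D * ξ ^ 2) ≤ S) (hup : S ≤ c * ξ) :
    0 < S ∧ 0 ≤ c / S - 1 / ξ ∧ c / S - 1 / ξ ≤ D * ξ / (c - D * ξ ^ 2) := by
  have hgap : 0 < c - D * ξ ^ 2 := sub_pos.mpr hsmall
  have hS : 0 < S := (mul_pos hξ hgap).trans_le hlow
  have hc : 0 < c := pos_of_mul_pos_left (hS.trans_le hup) hξ.le
  refine ⟨hS, sub_nonneg.mpr ?_, ?_⟩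
  · calc 1 / ξ = c / (c * ξ) := by field_simp
      _ ≤ c / S := by gcongr
  · calc c / S - 1 / ξ ≤ c / (ξ * (c - D * ξ ^ 2)) - 1 / ξ := by gcongr
      _ = D * ξ / (c - D * ξ ^ 2) := by
        rw [div_sub_div _ _ (by positivity) hξ.ne', div_eq_div_iff (by positivity) hgap.ne']
        ring

/-- near-field bound on the deviation of the nonlocal
antiderivative's Fourier multiplier `2π/S_ε(ξ)` from the classical `1/ξ`. -/
theorem stmt_15 (β : ℝ → ℝ) (hβmeas : Measurable β) (hnn : ∀ s, 0 < s → 0 ≤ β s)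
    (hint1 : IntegrableOn (fun s => s * β s) (Set.Ioi 0))
    (hint3 : IntegrableOn (fun s => s ^ 3 * β s) (Set.Ioi 0))
    (α₁ α₃ : ℝ)
    (hα₁ : α₁ = 2 * ∫ s in Set.Ioi (0:ℝ), s * β s)
    (hα₃ : α₃ = 2 * ∫ s in Set.Ioi (0:ℝ), s ^ 3 * β s)
    (hα₁pos : 0 < α₁)
    (Cα : ℝ) (hC : Cα = 4 * π ^ 3 * α₃ / (3 * α₁))
    (S : ℝ → ℝ → ℝ)
    (hS : ∀ ε ξ, S ε ξ =
      2 * ∫ t in Set.Ioi (0:ℝ), Real.sin (2 * π * ξ * t) * (β (t / ε) / (ε ^ 2 * α₁)))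
    (ε : ℝ) (hε : 0 < ε) (ξ : ℝ) (hξ : 0 < ξ)
    (hsmall : Cα * ε ^ 2 * ξ ^ 2 < 2 * π) :
    0 < S ε ξ ∧ 0 ≤ 2 * π / S ε ξ - 1 / ξ ∧
      2 * π / S ε ξ - 1 / ξ ≤ Cα * ε ^ 2 * ξ / (2 * π - Cα * ε ^ 2 * ξ ^ 2) := by
  set k := 2 * π * ξ * ε
  have hk : 0 ≤ k := by positivity
  have hSk : S ε ξ = 2 / (ε * α₁) * ∫ s in Ioi 0, sin (k * s) * β s := by
    have hrescale : ∀ t, sin (2 * π * ξ * t) * (β (t / ε) / (ε ^ 2 * α₁)) =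
        sin (k * (t / ε)) * β (t / ε) / (ε ^ 2 * α₁) := fun t => by
      rw [show k * (t / ε) = 2 * π * ξ * t by simp only [k]; field_simp]; ring
    simp only [hS, hrescale, integral_div, integral_Ioi_comp_div (fun s => sin (k * s) * β s) hε,
      smul_eq_mul]
    field_simp
  have hup := integral_sin_mul_mul_le hβmeas hnn hint1 hk
  have hlow := le_integral_sin_mul_mul hβmeas hnn hint1 hint3 hk
  have hJ1 : 0 < ∫ s in Ioi 0, s * β s := by linarith
  refine div_sub_one_div_bounds_of_sandwich hξ (by linarith) ?_ ?_
  · calc ξ * (2 * π - Cα * ε ^ 2 * ξ ^ 2)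
        = 2 / (ε * α₁) *
            ((k * ∫ s in Ioi 0, s * β s) - k ^ 3 / 6 * ∫ s in Ioi 0, s ^ 3 * β s) := by
          simp only [hC, hα₁, hα₃, k]; field_simp; ring
      _ ≤ S ε ξ := by rw [hSk]; gcongr
  · calc S ε ξ ≤ 2 / (ε * α₁) * (k * ∫ s in Ioi 0, s * β s) := by rw [hSk]; gcongr
      _ = 2 * π * ξ := by simp only [hα₁, k]; field_simp
end

section
/- Let α(s) = sgn(s)·β(|s|) with β : (0,∞) → [0,∞) nonincreasing, min(s,1)·β(s) integrable on (0,∞), and α₁ := 2∫₀^∞ s·β(s) ds ∈ (0,∞). Assume the singular flatness condition: there exist b > 0, k ∈ (−2,0), and K₋, K₊ > 0 with K₋·s^k ≤ β(s) ≤ K₊·s^k for all s ∈ (0,b), and c := ∫₀¹ sin(πu)·(K₋·u^k − K₊·(u+1)^k) du > 0; set C′ := c·2^{−k}/α₁. Then for every ε > 0 and every ξ ≥ 1/(εb): S_ε(ξ) > 0 and 2π/S_ε(ξ) − 1/ξ ≤ (2π/C′)·ε^{2+k}·ξ^{1+k} − 1/ξ. (Far-field bound on the deviation of the nonlocal antiderivative's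 Fourier multiplier from the classical multiplier 1/ξ.) -/
open MeasureTheory Real Set Filter

/-!
Write `f t = β (t / ε)` and `H = 1 / (2ξ)`, the half period of `t ↦ sin (2πξt)`. Since
`sin (2πξ (x + H)) = -sin (2πξx)`, the integral of `sin (2πξt) f t` over a period `[2nH, 2(n+1)H]`
equals `∫_{2nH}^{2nH+H} sin (2πξx) (f x - f (x + H)) dx`, which is nonnegative because `f` is
nonincreasing. Hence `∫₀^∞ sin (2πξt) f t dt` dominates its first-period term. As `2H ≤ εb`, the
power bounds on `β` apply on that period, and the substitution `x = u / (2ξ)` evaluates the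
resulting lower bound as `(2ξ)⁻¹ (2ξε)^(-k) c`, which rearranges to `S_ε(ξ) ≥ C' ε^(-2-k) ξ^(-1-k)`.
-/

lemma abs_sin_mul_le_max_mul_min {l t : ℝ} (ht : 0 ≤ t) :
    |sin (l * t)| ≤ max |l| 1 * min t 1 := by
  rcases le_total t 1 with h | h
  · calc |sin (l * t)| ≤ |l * t| := abs_sin_le_abs
      _ = |l| * t := by rw [abs_mul, abs_of_nonneg ht]
      _ ≤ max |l| 1 * min t 1 := by rw [min_eq_left h]; gcongr; exact le_max_left _ _
  · calc |sin (l * t)| ≤ 1 := abs_sin_le_one _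
      _ ≤ max |l| 1 * min t 1 := by rw [min_eq_right h, mul_one]; exact le_max_right _ _

lemma integrableOn_sin_mul_of_antitoneOn {f : ℝ → ℝ} (hf : AntitoneOn f (Ioi 0))
    (hf0 : ∀ t, 0 < t → 0 ≤ f t) (hfi : IntegrableOn (fun t => min t 1 * f t) (Ioi 0))
    (l : ℝ) : IntegrableOn (fun t => sin (l * t) * f t) (Ioi 0) := by
  have hmeas : AEStronglyMeasurable (fun t => sin (l * t) * f t) (volume.restrict (Ioi 0)) :=
    ((by fun_prop : Measurable fun t => sin (l * t)).aemeasurable.mul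
      (aemeasurable_restrict_of_antitoneOn measurableSet_Ioi hf)).aestronglyMeasurable
  refine (hfi.const_mul (max |l| 1)).mono' hmeas ?_
  filter_upwards [ae_restrict_mem measurableSet_Ioi] with t (ht : 0 < t)
  rw [norm_mul, norm_of_nonneg (hf0 t ht), ← mul_assoc]
  exact mul_le_mul_of_nonneg_right (abs_sin_mul_le_max_mul_min ht.le) (hf0 t ht)

lemma IntegrableOn.comp_div_of_Ioi_zero {g : ℝ → ℝ} (hg : IntegrableOn g (Ioi 0)) {ε : ℝ}
    (hε : 0 < ε) : IntegrableOn (fun t => g (t / ε)) (Ioi 0) := by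
  rw [← integrable_indicator_iff measurableSet_Ioi] at hg ⊢
  have hind : ((Ioi 0).indicator fun t => g (t / ε)) = fun t => (Ioi 0).indicator g (t / ε) := by
    ext t
    simp only [indicator, mem_Ioi, div_pos_iff_of_pos_right hε]
  rw [hind]
  exact hg.comp_div hε.ne'

section HalfPeriods

variable {f : ℝ → ℝ} {l H a : ℝ}

lemma sin_mul_add_of_mul_eq_pi_s16 (hlH : l * H = π) (x : ℝ) : sin (l * (x + H)) = -sin (l * x) := by
  rw [mul_add, hlH, sin_add_pi]

lemma sin_mul_sub_shift_eq (hlH : l * H = π) (x : ℝ) :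
    sin (l * x) * (f x - f (x + H)) = sin (l * x) * f x + sin (l * (x + H)) * f (x + H) := by
  rw [sin_mul_add_of_mul_eq_pi_s16 hlH]; ring

lemma intervalIntegrable_halves (hH : 0 ≤ H) {g : ℝ → ℝ}
    (hg : IntervalIntegrable g volume a (a + 2 * H)) :
    IntervalIntegrable g volume a (a + H) ∧ IntervalIntegrable g volume (a + H) (a + 2 * H) :=
  ⟨hg.mono_set (uIcc_subset_uIcc (by simp [uIcc_of_le, hH]) (by simp [uIcc_of_le, hH]; linarith)),
    hg.mono_set (uIcc_subset_uIcc (by simp [uIcc_of_le, hH]; linarith) (by simp [uIcc_of_le, hH]))⟩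

lemma intervalIntegrable_sin_mul_shift (hH : 0 ≤ H)
    (hfi : IntervalIntegrable (fun x => sin (l * x) * f x) volume a (a + 2 * H)) :
    IntervalIntegrable (fun x => sin (l * (x + H)) * f (x + H)) volume a (a + H) := by
  simpa [show a + 2 * H - H = a + H by ring] using
    (intervalIntegrable_halves hH hfi).2.comp_add_right H

lemma intervalIntegrable_sin_mul_sub_shift (hlH : l * H = π) (hH : 0 ≤ H)
    (hfi : IntervalIntegrable (fun x => sin (l * x) * f x) volume a (a + 2 * H)) :
    IntervalIntegrable (fun x => sin (l * x) * (f x - f (x + H))) volume a (a + H) := by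
  simp_rw [sin_mul_sub_shift_eq hlH]
  exact (intervalIntegrable_halves hH hfi).1.add (intervalIntegrable_sin_mul_shift hH hfi)

lemma integral_sin_mul_eq_integral_sin_mul_sub_shift (hlH : l * H = π) (hH : 0 ≤ H)
    (hfi : IntervalIntegrable (fun x => sin (l * x) * f x) volume a (a + 2 * H)) :
    ∫ x in a..a + 2 * H, sin (l * x) * f x = ∫ x in a..a + H, sin (l * x) * (f x - f (x + H)) := by
  obtain ⟨h₁, h₂⟩ := intervalIntegrable_halves hH hfi
  simp_rw [sin_mul_sub_shift_eq hlH]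
  rw [intervalIntegral.integral_add h₁ (intervalIntegrable_sin_mul_shift hH hfi),
    intervalIntegral.integral_comp_add_right (fun x => sin (l * x) * f x),
    show a + H + H = a + 2 * H by ring, intervalIntegral.integral_add_adjacent_intervals h₁ h₂]

lemma integral_sin_mul_sub_shift_nonneg_s16 (hf : AntitoneOn f (Ioi 0)) (hl : 0 < l)
    (hlH : l * H = π) (n : ℕ) :
    0 ≤ ∫ x in 2 * H * n..2 * H * n + H, sin (l * x) * (f x - f (x + H)) := by
  have hH : 0 < H := pos_of_mul_pos_right (hlH ▸ pi_pos) hl.le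
  have ha : 0 ≤ 2 * H * n := by positivity
  rw [intervalIntegral.integral_of_le (by linarith)]
  refine setIntegral_nonneg measurableSet_Ioc fun x ⟨hx₁, hx₂⟩ => mul_nonneg ?_ ?_
  · have hx : l * x = l * (x - 2 * H * n) + n * (2 * π) := by linear_combination (2 * n) * hlH
    rw [hx, sin_add_nat_mul_two_pi]
    apply sin_nonneg_of_nonneg_of_le_pi <;> nlinarith
  · exact sub_nonneg.2 <| hf (by simp; linarith) (by simp; linarith) (by linarith)

lemma integral_sin_mul_sub_shift_le_integral_Ioi_s16 (hf : AntitoneOn f (Ioi 0)) (hl : 0 < l)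
    (hlH : l * H = π) (hfi : IntegrableOn (fun t => sin (l * t) * f t) (Ioi 0)) :
    ∫ x in 0..H, sin (l * x) * (f x - f (x + H)) ≤ ∫ t in Ioi 0, sin (l * t) * f t := by
  have hH : 0 < H := pos_of_mul_pos_right (hlH ▸ pi_pos) hl.le
  have hperiod (k : ℕ) :
      IntervalIntegrable (fun x => sin (l * x) * f x) volume (2 * H * k) (2 * H * k + 2 * H) := by
    rw [intervalIntegrable_iff_integrableOn_Ioc_of_le (by linarith)]
    exact hfi.mono_set fun x hx => lt_of_le_of_lt (by positivity) hx.1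
  have hpartial (n : ℕ) : ∑ k ∈ Finset.range n,
      ∫ x in 2 * H * k..2 * H * k + H, sin (l * x) * (f x - f (x + H)) =
        ∫ x in 0..2 * H * n, sin (l * x) * f x := by
    have hstep (k : ℕ) : 2 * H * ((k + 1 : ℕ) : ℝ) = 2 * H * k + 2 * H := by push_cast; ring
    have hsum := intervalIntegral.sum_integral_adjacent_intervals (a := fun k : ℕ => 2 * H * k)
      (n := n) fun k _ => hstep k ▸ hperiod k
    rw [Nat.cast_zero, mul_zero] at hsum
    rw [← hsum]
    refine Finset.sum_congr rfl fun k _ => ?_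
    rw [hstep, integral_sin_mul_eq_integral_sin_mul_sub_shift hlH hH.le (hperiod k)]
  have hu : Tendsto (fun n : ℕ => 2 * H * n) atTop atTop :=
    tendsto_natCast_atTop_atTop.const_mul_atTop (by positivity)
  refine ge_of_tendsto (intervalIntegral_tendsto_integral_Ioi 0 hfi hu)
    (eventually_atTop.2 ⟨1, fun n hn => ?_⟩)
  rw [← hpartial]
  simpa using Finset.single_le_sum (fun k _ => integral_sin_mul_sub_shift_nonneg_s16 hf hl hlH k)
    (Finset.mem_range.2 hn)

lemma integral_sin_mul_le_integral_Ioi_of_le_sub_shift (hf : AntitoneOn f (Ioi 0)) (hl : 0 < l)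
    (hlH : l * H = π) (hfi : IntegrableOn (fun t => sin (l * t) * f t) (Ioi 0)) {g : ℝ → ℝ}
    (hgi : IntervalIntegrable (fun x => sin (l * x) * g x) volume 0 H)
    (hg : ∀ x ∈ Ioo 0 H, g x ≤ f x - f (x + H)) :
    ∫ x in 0..H, sin (l * x) * g x ≤ ∫ t in Ioi 0, sin (l * t) * f t := by
  have hH : 0 < H := pos_of_mul_pos_right (hlH ▸ pi_pos) hl.le
  have hfi₀ : IntervalIntegrable (fun x => sin (l * x) * f x) volume 0 (0 + 2 * H) := by
    rw [intervalIntegrable_iff_integrableOn_Ioc_of_le (by positivity)]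
    exact hfi.mono_set Ioc_subset_Ioi_self
  have hsub := intervalIntegrable_sin_mul_sub_shift hlH hH.le hfi₀
  rw [zero_add] at hsub
  refine (intervalIntegral.integral_mono_on_of_le_Ioo hH.le hgi hsub fun x hx => ?_).trans
    (integral_sin_mul_sub_shift_le_integral_Ioi_s16 hf hl hlH hfi)
  have hsin : 0 ≤ sin (l * x) :=
    sin_nonneg_of_nonneg_of_le_pi (by nlinarith [hx.1]) (by nlinarith [hx.2])
  exact mul_le_mul_of_nonneg_left (hg x hx) hsin

end HalfPeriods

lemma integrableOn_sin_mul_comp_div {β : ℝ → ℝ} (hβ : AntitoneOn β (Ioi 0))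
    (hβ0 : ∀ s, 0 < s → 0 ≤ β s) (hβi : IntegrableOn (fun s => min s 1 * β s) (Ioi 0))
    {ε : ℝ} (hε : 0 < ε) (l : ℝ) :
    IntegrableOn (fun t => sin (l * t) * β (t / ε)) (Ioi 0) := by
  refine (IntegrableOn.comp_div_of_Ioi_zero
    (integrableOn_sin_mul_of_antitoneOn hβ hβ0 hβi (l * ε)) hε).congr_fun
    (fun t _ => ?_) measurableSet_Ioi
  field_simp

lemma integral_sin_mul_rpow_sub_rpow_shift {ξ ε : ℝ} (hξ : 0 < ξ) (hε : 0 < ε) (k Km Kp : ℝ) :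
    ∫ x in 0..1 / (2 * ξ),
        sin (2 * π * ξ * x) * (Km * (x / ε) ^ k - Kp * ((x + 1 / (2 * ξ)) / ε) ^ k) =
      (2 * ξ)⁻¹ * (2 * ξ * ε) ^ (-k) *
        ∫ u in Ioo 0 1, sin (π * u) * (Km * u ^ k - Kp * (u + 1) ^ k) := by
  set g : ℝ → ℝ := fun u => sin (π * u) * (Km * u ^ k - Kp * (u + 1) ^ k)
  have hscale {y : ℝ} (hy : 0 ≤ y) : (y / ε) ^ k = (2 * ξ * ε) ^ (-k) * (2 * ξ * y) ^ k := by
    rw [rpow_neg (by positivity), ← div_eq_inv_mul, ← div_rpow (by positivity) (by positivity),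
      mul_div_mul_left _ _ (by positivity)]
  have hpt : EqOn (fun x => sin (2 * π * ξ * x) *
      (Km * (x / ε) ^ k - Kp * ((x + 1 / (2 * ξ)) / ε) ^ k))
      (fun x => (2 * ξ * ε) ^ (-k) * g (2 * ξ * x)) (uIcc 0 (1 / (2 * ξ))) := by
    intro x hx
    have hx0 : 0 ≤ x := by rw [uIcc_of_le (by positivity)] at hx; exact hx.1
    dsimp only
    rw [hscale hx0, hscale (by positivity), mul_add, mul_one_div_cancel (by positivity)]
    simp only [g]
    ring_nf
  rw [intervalIntegral.integral_congr hpt, intervalIntegral.integral_const_mul,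
    intervalIntegral.integral_comp_mul_left g (by positivity), mul_zero,
    mul_one_div_cancel (by positivity), intervalIntegral.integral_of_le zero_le_one,
    integral_Ioc_eq_integral_Ioo, smul_eq_mul]
  ring

lemma rpow_comparison_le_integral_sin_mul_comp_div {β : ℝ → ℝ} (hβ : AntitoneOn β (Ioi 0))
    (hβ0 : ∀ s, 0 < s → 0 ≤ β s) (hβi : IntegrableOn (fun s => min s 1 * β s) (Ioi 0))
    {b k Km Kp ε ξ : ℝ} (hε : 0 < ε) (hξ : 0 < ξ) (hbξ : 1 / ξ ≤ ε * b)
    (hlow : ∀ s, 0 < s → s < b → Km * s ^ k ≤ β s)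
    (hhigh : ∀ s, 0 < s → s < b → β s ≤ Kp * s ^ k)
    (hc : ∫ u in Ioo 0 1, sin (π * u) * (Km * u ^ k - Kp * (u + 1) ^ k) ≠ 0) :
    (2 * ξ)⁻¹ * (2 * ξ * ε) ^ (-k) * ∫ u in Ioo 0 1, sin (π * u) * (Km * u ^ k - Kp * (u + 1) ^ k)
      ≤ ∫ t in Ioi 0, sin (2 * π * ξ * t) * β (t / ε) := by
  set H := 1 / (2 * ξ) with hH
  have hlH : 2 * π * ξ * H = π := by rw [hH]; field_simp
  have hHb : 2 * H ≤ ε * b := by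
    rwa [hH, mul_one_div, div_mul_cancel_left₀ two_ne_zero, ← one_div]
  have hf : AntitoneOn (fun t => β (t / ε)) (Ioi 0) := fun s hs t ht hst =>
    hβ (div_pos hs hε) (div_pos ht hε) (div_le_div_of_nonneg_right hst hε.le)
  have hQ := integral_sin_mul_rpow_sub_rpow_shift hξ hε k Km Kp
  rw [← hQ]
  -- The comparison integrand is integrable because its integral is nonzero.
  have hQi := intervalIntegral.intervalIntegrable_of_integral_ne_zero
    (hQ ▸ mul_ne_zero (by positivity) hc)
  refine integral_sin_mul_le_integral_Ioi_of_le_sub_shift hf (by positivity) hlH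
    (integrableOn_sin_mul_comp_div hβ hβ0 hβi hε _) hQi fun x hx => ?_
  refine sub_le_sub (hlow _ (div_pos hx.1 hε) ?_)
    (hhigh _ (div_pos (by linarith [hx.1, hx.2]) hε) ?_) <;>
  · rw [div_lt_iff₀ hε]; linarith [hx.1, hx.2]

lemma two_mul_inv_mul_rpow_neg_div_eq {ξ ε α₁ : ℝ} (hξ : 0 < ξ) (hε : 0 < ε) (hα₁ : α₁ ≠ 0)
    (k c : ℝ) :
    2 * ((2 * ξ)⁻¹ * (2 * ξ * ε) ^ (-k) * c) / (ε ^ 2 * α₁) =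
      c * 2 ^ (-k) / α₁ / (ε ^ (2 + k) * ξ ^ (1 + k)) := by
  rw [rpow_neg (by positivity), rpow_neg zero_le_two, mul_rpow (by positivity) hε.le,
    mul_rpow zero_le_two hξ.le, rpow_add hε, rpow_add hξ, rpow_two, rpow_one]
  field_simp

theorem stmt_16_general (β : ℝ → ℝ) (hnn : ∀ s, 0 < s → 0 ≤ β s)
    (hmono : ∀ s t, 0 < s → s ≤ t → β t ≤ β s)
    (hint : IntegrableOn (fun s => min s 1 * β s) (Set.Ioi 0))
    (α₁ : ℝ) (hα₁pos : 0 < α₁)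
    (b k Km Kp : ℝ) (hb : 0 < b)
    (hlow : ∀ s, 0 < s → s < b → Km * s ^ k ≤ β s)
    (hhigh : ∀ s, 0 < s → s < b → β s ≤ Kp * s ^ k)
    (c : ℝ)
    (hc : c = ∫ u in Set.Ioo (0:ℝ) 1, Real.sin (π * u) * (Km * u ^ k - Kp * (u + 1) ^ k))
    (hcpos : 0 < c)
    (C' : ℝ) (hC' : C' = c * (2:ℝ) ^ (-k) / α₁)
    (S : ℝ → ℝ → ℝ)
    (hS : ∀ ε ξ, S ε ξ =
      2 * ∫ t in Set.Ioi (0:ℝ), Real.sin (2 * π * ξ * t) * (β (t / ε) / (ε ^ 2 * α₁)))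
    (ε : ℝ) (hε : 0 < ε) (ξ : ℝ) (hξ : 1 / (ε * b) ≤ ξ) :
    0 < S ε ξ ∧
    2 * π / S ε ξ - 1 / ξ ≤ (2 * π / C') * ε ^ (2 + k) * ξ ^ (1 + k) - 1 / ξ := by
  have hξ0 : 0 < ξ := lt_of_lt_of_le (by positivity) hξ
  have hQI := rpow_comparison_le_integral_sin_mul_comp_div (fun s hs t _ hst => hmono s t hs hst)
    hnn hint hε hξ0 ((one_div_le (by positivity) hξ0).1 hξ) hlow hhigh (hc ▸ hcpos.ne')
  rw [← hc] at hQI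
  have hlower : C' / (ε ^ (2 + k) * ξ ^ (1 + k)) ≤ S ε ξ := by
    rw [hC', ← two_mul_inv_mul_rpow_neg_div_eq hξ0 hε hα₁pos.ne', hS]
    simp only [← mul_div_assoc, integral_div]
    gcongr
  have hC'pos : 0 < C' / (ε ^ (2 + k) * ξ ^ (1 + k)) := by rw [hC']; positivity
  refine ⟨hC'pos.trans_le hlower, sub_le_sub_right ?_ _⟩
  calc 2 * π / S ε ξ ≤ 2 * π / (C' / (ε ^ (2 + k) * ξ ^ (1 + k))) := by gcongr
    _ = 2 * π / C' * ε ^ (2 + k) * ξ ^ (1 + k) := by field_simp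

/-- far-field bound on the deviation of the nonlocal
antiderivative's Fourier multiplier `2π/S_ε(ξ)` from the classical `1/ξ`,
singular kernel case. -/
theorem stmt_16 (β : ℝ → ℝ) (hnn : ∀ s, 0 < s → 0 ≤ β s)
    (hmono : ∀ s t, 0 < s → s ≤ t → β t ≤ β s)
    (hint : IntegrableOn (fun s => min s 1 * β s) (Set.Ioi 0))
    (α₁ : ℝ) (hα₁ : α₁ = 2 * ∫ s in Set.Ioi (0:ℝ), s * β s) (hα₁pos : 0 < α₁)
    (b k Km Kp : ℝ) (hb : 0 < b) (hkl : -2 < k) (hku : k < 0)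
    (hKm : 0 < Km) (hKp : 0 < Kp)
    (hlow : ∀ s, 0 < s → s < b → Km * s ^ k ≤ β s)
    (hhigh : ∀ s, 0 < s → s < b → β s ≤ Kp * s ^ k)
    (c : ℝ)
    (hc : c = ∫ u in Set.Ioo (0:ℝ) 1, Real.sin (π * u) * (Km * u ^ k - Kp * (u + 1) ^ k))
    (hcpos : 0 < c)
    (C' : ℝ) (hC' : C' = c * (2:ℝ) ^ (-k) / α₁)
    (S : ℝ → ℝ → ℝ)
    (hS : ∀ ε ξ, S ε ξ =
      2 * ∫ t in Set.Ioi (0:ℝ), Real.sin (2 * π * ξ * t) * (β (t / ε) / (ε ^ 2 * α₁)))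
    (ε : ℝ) (hε : 0 < ε) (ξ : ℝ) (hξ : 1 / (ε * b) ≤ ξ) :
    0 < S ε ξ ∧
    2 * π / S ε ξ - 1 / ξ ≤ (2 * π / C') * ε ^ (2 + k) * ξ ^ (1 + k) - 1 / ξ :=
  stmt_16_general β hnn hmono hint α₁ hα₁pos b k Km Kp hb hlow hhigh c hc hcpos C' hC' S hS ε hε ξ
    hξ
end
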